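/- arXiv:2504.12430 — 3 statements merged into one kernel-verified Lean document; each statement's English description precedes it below -/
import Mathlib

section
/- Let b ≥ 1 and let s_1, s_2, ..., s_b be nonnegative reals such that for every j with 1 ≤ j ≤ b we have s_1 ≥ s_j - s_{j+1} + s_{j+2} - ... + (-1)^{b-j} s_b. Then the alternating sum ∑_{i=1}^{b} (-1)^{i+1} s_i / i is at least s_1 / b. -/
/-!
With the alternating tails `T k = s k - s (k+1) + ⋯ ± s b` one has `s k = T k + T (k+1)`, and
summation by parts turns `∑ (-1)^(i+1) s i / i` into `T 1 + ∑_{k ≥ 2} (-1)^k T k / ((k-1) k)`.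
The hypothesis says `T k ≤ s 1`, and together with `s k ≥ 0` it also gives `-s 1 ≤ T k`.
The first two terms are `T 1 + T 2 / 2 = s 1 - T 2 / 2 ≥ s 1 / 2`, every later term is at least
`-s 1 / ((k-1) k)`, and these weights telescope to `s 1 / 2 - s 1 (1/2 - 1/b) = s 1 / b`.
-/

open Finset

noncomputable def altTail (s : ℕ → ℝ) (b k : ℕ) : ℝ :=
  ∑ i ∈ Icc k b, (-1) ^ (i - k) * s i

section altTail

variable {s : ℕ → ℝ} {b k : ℕ}

lemma altTail_eq_zero_of_lt (h : b < k) : altTail s b k = 0 := by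
  rw [altTail, Icc_eq_empty_of_lt h, sum_empty]

lemma altTail_add_altTail_succ (h : k ≤ b) : altTail s b k + altTail s b (k + 1) = s k := by
  have hshift : ∀ i ∈ Ioc k b, (-1 : ℝ) ^ (i - k) = -(-1) ^ (i - (k + 1)) := by
    intro i hi
    rw [show i - k = i - (k + 1) + 1 by grind, pow_succ, mul_neg_one]
  rw [altTail, altTail, Icc_eq_cons_Ioc h, sum_cons, ← Icc_add_one_left_eq_Ioc,
    sum_congr rfl (fun i hi => by rw [hshift i (by rwa [← Icc_add_one_left_eq_Ioc])])]
  simp only [Nat.sub_self, pow_zero, one_mul, neg_mul, sum_neg_distrib]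
  ring

lemma abs_altTail_le (hs : ∀ i ∈ Icc 1 b, 0 ≤ s i) (h : ∀ j ∈ Icc 1 b, altTail s b j ≤ s 1)
    (hk : k ∈ Icc 1 b) : |altTail s b k| ≤ s 1 := by
  obtain ⟨hk1, hkb⟩ := mem_Icc.mp hk
  have hsucc : altTail s b (k + 1) ≤ s 1 := by
    rcases hkb.lt_or_eq with hlt | rfl
    · exact h (k + 1) (mem_Icc.mpr ⟨by omega, hlt⟩)
    · rw [altTail_eq_zero_of_lt k.lt_succ_self]
      exact hs 1 (mem_Icc.mpr ⟨le_rfl, hk1⟩)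
  have hsplit := altTail_add_altTail_succ (s := s) hkb
  exact abs_le.mpr ⟨by linarith [hs k hk], h k hk⟩

end altTail

lemma sum_Ioc_one_div_pred_mul {m n : ℕ} (hm : 1 ≤ m) (hmn : m ≤ n) :
    ∑ k ∈ Ioc m n, 1 / (((k : ℝ) - 1) * k) = 1 / m - 1 / n := by
  induction n, hmn using Nat.le_induction with
  | base => simp
  | succ n hmn ih =>
    have hm : (m : ℝ) ≠ 0 := Nat.cast_ne_zero.mpr (by omega)
    have hn : (n : ℝ) ≠ 0 := Nat.cast_ne_zero.mpr (by omega)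
    rw [sum_Ioc_succ_top hmn, ih]
    push_cast
    rw [add_sub_cancel_right]
    field_simp
    ring

lemma sum_Icc_neg_one_pow_mul_add_succ_div (T : ℕ → ℝ) {n : ℕ} (hn : 1 ≤ n) :
    ∑ i ∈ Icc 1 n, (-1) ^ (i + 1) * (T i + T (i + 1)) / i
      = T 1 + ∑ k ∈ Ioc 1 n, (-1) ^ k * T k / (((k : ℝ) - 1) * k)
        + (-1) ^ (n + 1) * T (n + 1) / n := by
  induction n, hn using Nat.le_induction with
  | base => simp
  | succ n hn ih =>
    have hn : (n : ℝ) ≠ 0 := Nat.cast_ne_zero.mpr (by omega)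
    rw [sum_Icc_succ_top (by omega), ih, sum_Ioc_succ_top (by omega)]
    push_cast
    rw [add_sub_cancel_right]
    field_simp
    ring

lemma div_le_add_sum_neg_one_pow_mul_div {T : ℕ → ℝ} {c : ℝ} {n : ℕ} (hn : 2 ≤ n)
    (h₁₂ : T 1 + T 2 = c) (h₂ : T 2 ≤ c) (hT : ∀ k ∈ Ioc 2 n, |T k| ≤ c) :
    c / n ≤ T 1 + ∑ k ∈ Ioc 1 n, (-1) ^ k * T k / (((k : ℝ) - 1) * k) := by
  have htail : ∑ k ∈ Ioc 2 n, -c * (1 / (((k : ℝ) - 1) * k))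
      ≤ ∑ k ∈ Ioc 2 n, (-1) ^ k * T k / (((k : ℝ) - 1) * k) := by
    refine sum_le_sum fun k hk => ?_
    have hk2 : (2 : ℝ) < k := by exact_mod_cast (mem_Ioc.mp hk).1
    rw [← div_eq_mul_one_div]
    gcongr
    · nlinarith
    · calc -c ≤ -|(-1) ^ k * T k| := by simpa using hT k hk
        _ ≤ _ := neg_abs_le _
  rw [← mul_sum, sum_Ioc_one_div_pred_mul (by norm_num) hn] at htail
  rw [← sum_Ioc_consecutive _ (by norm_num : 1 ≤ 2) hn]
  norm_num
  linarith [show -c * (1 / (2 : ℕ) - 1 / n) = c / n - c / 2 by push_cast; ring]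

theorem stmt_8 (b : ℕ) (hb : 1 ≤ b) (s : ℕ → ℝ) (hs : ∀ i ∈ Finset.Icc 1 b, 0 ≤ s i)
    (h : ∀ j ∈ Finset.Icc 1 b, s 1 ≥ ∑ i ∈ Finset.Icc j b, (-1 : ℝ) ^ (i - j) * s i) :
    ∑ i ∈ Finset.Icc 1 b, (-1 : ℝ) ^ (i + 1) * s i / (i : ℝ) ≥ s 1 / (b : ℝ) := by
  obtain rfl | hb₂ := hb.eq_or_lt
  · simp
  have hs_eq : ∀ i ∈ Icc 1 b, s i = altTail s b i + altTail s b (i + 1) :=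
    fun i hi => (altTail_add_altTail_succ (mem_Icc.mp hi).2).symm
  have habel := sum_Icc_neg_one_pow_mul_add_succ_div (altTail s b) hb
  rw [altTail_eq_zero_of_lt b.lt_succ_self, mul_zero, zero_div, add_zero] at habel
  rw [ge_iff_le, sum_congr rfl fun i hi => by rw [hs_eq i hi], habel]
  refine div_le_add_sum_neg_one_pow_mul_div hb₂ (altTail_add_altTail_succ hb) ?_ ?_
  · exact h 2 (mem_Icc.mpr ⟨by norm_num, hb₂⟩)
  · intro k hk
    exact abs_altTail_le hs h (Ioc_subset_Icc_self (Ioc_subset_Ioc_left (by norm_num) hk))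
end

section
/- Let 1 ≤ b < a and n ≥ 1 be integers with vb divisible by a and v ≥ n. Set p = a·C(bv/a, n)/(b·C(v, n)). If m is a positive integer with C(a,b)^v · (1-p)^m < 1, then there exists an n-uniform hypergraph H on v vertices with at most m edges that admits no proper (a:b)-coloring. -/
/-!
Fix the `C(v, n)^m` tuples of `m` edges drawn from all `n`-subsets of the `v` vertices. In an
`(a:b)`-coloring the `a` colour classes have total size `vb`, so by convexity of `k ↦ C(k, n)`
they contain at least `a·C(vb/a, n)` `n`-sets, and an `n`-set lies inside at most `b` classes.
Hence at least `p·C(v, n)` edges are monochromatic, and at most `((1 - p)·C(v, n))^m` tuples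
avoid them. Summed over the `C(a, b)^v` colorings this is less than `C(v, n)^m`, so some tuple
meets a monochromatic edge of every coloring.
-/

open Finset

/-- The tangent line at `q` of the convex sequence `k ↦ C(k, n + 1)`, whose slope is `C(q, n)`,
lies below it. -/
theorem Nat.cast_choose_succ_add_sub_mul_choose_le (q k n : ℕ) :
    (q.choose (n + 1) : ℤ) + ((k : ℤ) - q) * q.choose n ≤ k.choose (n + 1) := by
  rcases le_total q k with hqk | hkq
  · obtain ⟨d, rfl⟩ := Nat.exists_eq_add_of_le hqk
    induction d with
    | zero => simp
    | succ d ih =>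
      have hmono : q.choose n ≤ (q + d).choose n := Nat.choose_le_choose n (Nat.le_add_right q d)
      rw [← add_assoc, Nat.choose_succ_succ']
      push_cast at ih hmono ⊢
      linarith [ih (Nat.le_add_right q d)]
  · obtain ⟨d, rfl⟩ := Nat.exists_eq_add_of_le hkq
    induction d with
    | zero => simp
    | succ d ih =>
      have hmono : (k + d).choose n ≤ (k + d + 1).choose n :=
        Nat.choose_le_choose n (Nat.le_succ _)
      rw [← add_assoc, Nat.choose_succ_succ']
      push_cast at ih hmono ⊢
      nlinarith [ih (Nat.le_add_right k d)]

theorem card_mul_choose_sum_div_card_le_sum_choose {ι : Type*} [Fintype ι] (x : ι → ℕ)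
    (n : ℕ) :
    Fintype.card ι * ((∑ i, x i) / Fintype.card ι).choose n ≤ ∑ i, (x i).choose n := by
  set q := (∑ i, x i) / Fintype.card ι
  cases n with
  | zero => simp
  | succ n =>
    have hq : ((Fintype.card ι * q : ℕ) : ℤ) ≤ ∑ i, (x i : ℤ) := by
      exact_mod_cast Nat.mul_div_le _ _
    zify
    calc (Fintype.card ι : ℤ) * q.choose (n + 1)
        ≤ ∑ i, ((q.choose (n + 1) : ℤ) + ((x i : ℤ) - q) * q.choose n) := by
          rw [sum_add_distrib, ← sum_mul, sum_sub_distrib]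
          push_cast at hq
          simp only [sum_const, card_univ, nsmul_eq_mul]
          nlinarith [(Nat.cast_nonneg (q.choose n) : (0 : ℤ) ≤ _)]
      _ ≤ ∑ i, ((x i).choose (n + 1) : ℤ) :=
          sum_le_sum fun i _ => Nat.cast_choose_succ_add_sub_mul_choose_le q (x i) n

theorem exists_forall_exists_mem_of_sum_card_sdiff_pow_lt {α κ : Type*} [DecidableEq α]
    {A : Finset α} {K : Finset κ} {B : κ → Finset α} {m : ℕ}
    (h : ∑ k ∈ K, #(A \ B k) ^ m < #A ^ m) :
    ∃ f : Fin m → α, (∀ i, f i ∈ A) ∧ ∀ k ∈ K, ∃ i, f i ∈ B k := by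
  by_contra! hcon
  have hcover : Fintype.piFinset (fun _ : Fin m => A) ⊆
      K.biUnion fun k => Fintype.piFinset fun _ : Fin m => A \ B k := by
    intro f hf
    rw [Fintype.mem_piFinset] at hf
    obtain ⟨k, hk, hfk⟩ := hcon f hf
    exact mem_biUnion.2 ⟨k, hk, Fintype.mem_piFinset.2 fun i => mem_sdiff.2 ⟨hf i, hfk i⟩⟩
  refine h.not_ge ?_
  calc #A ^ m = #(Fintype.piFinset fun _ : Fin m => A) := by simp
    _ ≤ #(K.biUnion fun k => Fintype.piFinset fun _ : Fin m => A \ B k) := card_le_card hcover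
    _ ≤ ∑ k ∈ K, #(Fintype.piFinset fun _ : Fin m => A \ B k) := card_biUnion_le
    _ = ∑ k ∈ K, #(A \ B k) ^ m := by simp

section Coloring

variable {V C : Type*} [Fintype V] [Fintype C] [DecidableEq C]

def monochromaticEdges (n : ℕ) (χ : V → Finset C) : Finset (Finset V) :=
  {e ∈ powersetCard n univ | ∃ γ, ∀ u ∈ e, γ ∈ χ u}

theorem mem_monochromaticEdges {n : ℕ} {χ : V → Finset C} {e : Finset V} :
    e ∈ monochromaticEdges n χ ↔ #e = n ∧ ∃ γ, ∀ u ∈ e, γ ∈ χ u := by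
  simp [monochromaticEdges]

theorem monochromaticEdges_subset (n : ℕ) (χ : V → Finset C) :
    monochromaticEdges n χ ⊆ powersetCard n univ :=
  filter_subset _ _

theorem sum_card_colorClass (χ : V → Finset C) :
    ∑ γ, #{u | γ ∈ χ u} = ∑ u, #(χ u) := by
  have := sum_card_bipartiteAbove_eq_sum_card_bipartiteBelow (fun u γ => γ ∈ χ u)
    (s := univ) (t := univ)
  simp only [bipartiteAbove, bipartiteBelow, filter_mem_eq_inter, univ_inter] at this
  exact this.symm

theorem sum_choose_card_colorClass_le {b n : ℕ} (hn : 0 < n) (χ : V → Finset C)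
    (hχ : ∀ u, #(χ u) ≤ b) :
    ∑ γ, (#{u | γ ∈ χ u}).choose n ≤ b * #(monochromaticEdges n χ) := by
  set r : Finset V → C → Prop := fun e γ => ∀ u ∈ e, γ ∈ χ u
  have hbelow : ∀ γ,
      (#{u | γ ∈ χ u}).choose n = #((powersetCard n univ).bipartiteBelow r γ) := by
    intro γ
    rw [← card_powersetCard]
    congr 1
    ext e
    simp only [bipartiteBelow, r, mem_filter, mem_powersetCard, subset_iff, mem_univ, true_and,
      implies_true]
    tauto
  have habove : ∀ e ∈ monochromaticEdges n χ, #(univ.bipartiteAbove r e) ≤ b := by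
    intro e he
    obtain ⟨u, hu⟩ : e.Nonempty := by
      rw [← card_pos, (mem_monochromaticEdges.1 he).1]
      exact hn
    exact (card_le_card fun γ hγ => ((mem_bipartiteAbove r).1 hγ).2 u hu).trans (hχ u)
  have hzero : ∀ e ∈ powersetCard n univ, e ∉ monochromaticEdges n χ →
      #(univ.bipartiteAbove r e) = 0 := by
    intro e he hne
    simp_all [monochromaticEdges, bipartiteAbove, r]
  calc ∑ γ, (#{u | γ ∈ χ u}).choose n
      = ∑ e ∈ powersetCard n univ, #(univ.bipartiteAbove r e) := by
        simp only [hbelow]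
        exact (sum_card_bipartiteAbove_eq_sum_card_bipartiteBelow r).symm
    _ = ∑ e ∈ monochromaticEdges n χ, #(univ.bipartiteAbove r e) :=
        (sum_subset (monochromaticEdges_subset n χ) hzero).symm
    _ ≤ b * #(monochromaticEdges n χ) := by
        rw [mul_comm, ← smul_eq_mul, ← sum_const]
        exact sum_le_sum habove

theorem card_mul_choose_le_mul_card_monochromaticEdges {b n : ℕ} (hn : 0 < n)
    (χ : V → Finset C) (hχ : ∀ u, #(χ u) = b) :
    Fintype.card C * (Fintype.card V * b / Fintype.card C).choose n
      ≤ b * #(monochromaticEdges n χ) := by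
  have hsum : ∑ γ, #{u | γ ∈ χ u} = Fintype.card V * b := by
    simp [sum_card_colorClass, hχ]
  calc Fintype.card C * (Fintype.card V * b / Fintype.card C).choose n
      ≤ ∑ γ, (#{u | γ ∈ χ u}).choose n := by
        rw [← hsum]
        exact card_mul_choose_sum_div_card_le_sum_choose _ n
    _ ≤ b * #(monochromaticEdges n χ) :=
        sum_choose_card_colorClass_le hn χ fun u => (hχ u).le

theorem card_sdiff_monochromaticEdges_le [DecidableEq V] {b n : ℕ} (hn : 0 < n)
    (hnV : n ≤ Fintype.card V) {p : ℝ}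
    (hp : p = Fintype.card C * ((Fintype.card V * b / Fintype.card C).choose n : ℝ)
      / (b * (Fintype.card V).choose n))
    (χ : V → Finset C) (hχ : ∀ u, #(χ u) = b) :
    (#(powersetCard n univ \ monochromaticEdges n χ) : ℝ)
      ≤ (1 - p) * (Fintype.card V).choose n := by
  have hsub := monochromaticEdges_subset n χ
  rw [card_sdiff_of_subset hsub, Nat.cast_sub (card_le_card hsub), card_powersetCard, card_univ]
  have hN : ((Fintype.card V).choose n : ℝ) ≠ 0 := by exact_mod_cast (Nat.choose_pos hnV).ne'
  have hpN : p * (Fintype.card V).choose n ≤ #(monochromaticEdges n χ) := by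
    rw [hp, mul_comm (b : ℝ), ← div_div, div_right_comm, div_mul_cancel₀ _ hN]
    refine div_le_of_le_mul₀ (Nat.cast_nonneg _) (Nat.cast_nonneg _) ?_
    rw [mul_comm _ (b : ℝ)]
    exact_mod_cast card_mul_choose_le_mul_card_monochromaticEdges hn χ hχ
  linarith

end Coloring

theorem stmt_15_general (a b n v : ℕ) (hn : 1 ≤ n)
    (hvn : n ≤ v) (p : ℝ)
    (hp : p = (a : ℝ) * (((v * b / a).choose n : ℝ)) / ((b : ℝ) * ((v.choose n : ℝ))))
    (m : ℕ) (hlt : ((a.choose b : ℝ)) ^ v * (1 - p) ^ m < 1) :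
    ∃ E : Finset (Finset (Fin v)), (∀ e ∈ E, e.card = n) ∧ E.card ≤ m ∧
      ∀ χ : Fin v → Finset (Fin a), (∀ u, (χ u).card = b) →
        ∃ e ∈ E, ∃ γ : Fin a, ∀ u ∈ e, γ ∈ χ u := by
  set colorings := Fintype.piFinset fun _ : Fin v => powersetCard b (univ : Finset (Fin a))
  set edges := powersetCard n (univ : Finset (Fin v))
  have hsparse : ∀ χ ∈ colorings,
      (#(edges \ monochromaticEdges n χ) : ℝ) ≤ (1 - p) * v.choose n := fun χ hχ => by
    simpa using card_sdiff_monochromaticEdges_le (V := Fin v) hn (by simpa using hvn)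
      (by simpa using hp) χ (by simpa [colorings] using hχ)
  have hcount : ∑ χ ∈ colorings, #(edges \ monochromaticEdges n χ) ^ m < #edges ^ m := by
    rw [← Nat.cast_lt (α := ℝ)]
    push_cast
    calc ∑ χ ∈ colorings, (#(edges \ monochromaticEdges n χ) : ℝ) ^ m
        ≤ ∑ _χ ∈ colorings, ((1 - p) * v.choose n) ^ m :=
          sum_le_sum fun χ hχ => pow_le_pow_left₀ (Nat.cast_nonneg _) (hsparse χ hχ) m
      _ = (a.choose b : ℝ) ^ v * (1 - p) ^ m * (v.choose n : ℝ) ^ m := by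
          simp [colorings, mul_pow, mul_assoc]
      _ < (v.choose n : ℝ) ^ m :=
          mul_lt_of_lt_one_left (pow_pos (by exact_mod_cast Nat.choose_pos hvn) m) hlt
      _ = (#edges : ℝ) ^ m := by simp [edges]
  obtain ⟨f, hf, hmono⟩ := exists_forall_exists_mem_of_sum_card_sdiff_pow_lt hcount
  refine ⟨image f univ, ?_, card_image_le.trans (by simp), fun χ hχ => ?_⟩
  · simp only [mem_image]
    rintro _ ⟨i, -, rfl⟩
    exact (mem_powersetCard.1 (hf i)).2
  · obtain ⟨i, hi⟩ := hmono χ (by simpa [colorings] using hχ)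
    exact ⟨f i, mem_image_of_mem f (mem_univ i), (mem_monochromaticEdges.1 hi).2⟩

theorem stmt_15 (a b n v : ℕ) (hb : 1 ≤ b) (hba : b < a) (hn : 1 ≤ n)
    (hdvd : a ∣ v * b) (hvn : n ≤ v) (p : ℝ)
    (hp : p = (a : ℝ) * (((v * b / a).choose n : ℝ)) / ((b : ℝ) * ((v.choose n : ℝ))))
    (m : ℕ) (hm : 0 < m) (hlt : ((a.choose b : ℝ)) ^ v * (1 - p) ^ m < 1) :
    ∃ E : Finset (Finset (Fin v)), (∀ e ∈ E, e.card = n) ∧ E.card ≤ m ∧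
      ∀ χ : Fin v → Finset (Fin a), (∀ u, (χ u).card = b) →
        ∃ e ∈ E, ∃ γ : Fin a, ∀ u ∈ e, γ ∈ χ u :=
  stmt_15_general a b n v hn hvn p hp m hlt
end

section
/- Let a', b, n be positive integers with 2 ≤ b < a' and a'·(b/(a'-b+1))^n ≤ 1. Then ∑_{k=1}^{b} k·C(a', k)·∏_{j=1}^{k-1} ((b-j)/(a'-j))^n ≤ e·a'. -/
/-! Each ratio `(b - j) / (a' - j)` with `1 ≤ j < b` is at most `b / (a' - b + 1)`, so the
hypothesis bounds the `k`-th product by `a' ^ (1 - k)`. Together with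
`k * C(a', k) ≤ a' ^ k / (k - 1)!` the `k`-th summand is at most `a' / (k - 1)!`, and the
partial sum of `∑ 1 / m!` is at most `e`. -/

open Finset Nat

lemma succ_mul_choose_succ_le (a m : ℕ) :
    ((m + 1 : ℕ) : ℝ) * a.choose (m + 1) ≤ (a : ℝ) ^ (m + 1) / m ! :=
  calc ((m + 1 : ℕ) : ℝ) * a.choose (m + 1)
      ≤ (m + 1 : ℕ) * ((a : ℝ) ^ (m + 1) / (m + 1)!) := by gcongr; exact choose_le_pow_div _ _
    _ = (a : ℝ) ^ (m + 1) / m ! := by rw [factorial_succ, cast_mul]; field_simp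

lemma sub_div_sub_mem_Icc {a b j : ℝ} (hj : 1 ≤ j) (hjb : j + 1 ≤ b) (hba : b < a + 1) :
    (b - j) / (a - j) ∈ Set.Icc 0 (b / (a - b + 1)) :=
  ⟨div_nonneg (by linarith) (by linarith),
    div_le_div₀ (by linarith) (by linarith) (by linarith) (by linarith)⟩

lemma prod_sub_div_sub_pow_le {a b : ℝ} {m : ℕ} (n : ℕ) (hmb : (m : ℝ) + 1 ≤ b)
    (hba : b < a + 1) :
    ∏ j ∈ Icc 1 m, ((b - j) / (a - j)) ^ n ≤ ((b / (a - b + 1)) ^ n) ^ m := by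
  have hfactor : ∀ j ∈ Icc 1 m, (b - j) / (a - j) ∈ Set.Icc 0 (b / (a - b + 1)) := by
    intro j hj
    have hjm : (j : ℝ) ≤ m := by exact_mod_cast (mem_Icc.1 hj).2
    exact sub_div_sub_mem_Icc (by exact_mod_cast (mem_Icc.1 hj).1) (by linarith) hba
  calc ∏ j ∈ Icc 1 m, ((b - j) / (a - j)) ^ n ≤ ∏ _j ∈ Icc 1 m, (b / (a - b + 1)) ^ n :=
        prod_le_prod (fun j hj => pow_nonneg (hfactor j hj).1 n)
          (fun j hj => pow_le_pow_left₀ (hfactor j hj).1 (hfactor j hj).2 n)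
    _ = ((b / (a - b + 1)) ^ n) ^ m := by rw [prod_const, card_Icc, Nat.add_sub_cancel]

lemma sum_Icc_one_eq_sum_range {M : Type*} [AddCommMonoid M] (f : ℕ → M) (b : ℕ) :
    ∑ k ∈ Icc 1 b, f k = ∑ m ∈ range b, f (m + 1) := by
  rw [range_eq_Ico, ← Ico_add_one_right_eq_Icc, sum_Ico_add' f 0 b 1]

lemma succ_mul_choose_succ_mul_prod_le {a b m : ℕ} (n : ℕ) (hmb : m < b) (hba : b < a)
    (hcond : ((b : ℝ) / (a - b + 1)) ^ n ≤ (a : ℝ)⁻¹) :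
    ((m + 1 : ℕ) : ℝ) * a.choose (m + 1) * ∏ j ∈ Icc 1 m, (((b : ℝ) - j) / (a - j)) ^ n
      ≤ a / m ! := by
  have ha : (a : ℝ) ≠ 0 := by exact_mod_cast (m.zero_le.trans_lt (hmb.trans hba)).ne'
  have hmb : (m : ℝ) + 1 ≤ b := by exact_mod_cast hmb
  have hba : (b : ℝ) < a + 1 := by exact_mod_cast hba.trans (lt_add_one a)
  have hratio : (0 : ℝ) ≤ b / (a - b + 1) := div_nonneg b.cast_nonneg (by linarith)
  calc ((m + 1 : ℕ) : ℝ) * a.choose (m + 1) * ∏ j ∈ Icc 1 m, (((b : ℝ) - j) / (a - j)) ^ n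
      ≤ (a : ℝ) ^ (m + 1) / m ! * (a : ℝ)⁻¹ ^ m :=
        mul_le_mul_of_nonneg (succ_mul_choose_succ_le a m)
          ((prod_sub_div_sub_pow_le n hmb hba).trans (pow_le_pow_left₀ (by positivity) hcond m))
          (by positivity) (by positivity)
    _ = a / m ! := by rw [inv_pow, pow_succ]; field_simp

theorem stmt_16_general (a' b n : ℕ) (hba : b < a')
    (hcond : (a' : ℝ) * ((b : ℝ) / ((a' : ℝ) - (b : ℝ) + 1)) ^ n ≤ 1) :
    ∑ k ∈ Finset.Icc 1 b, (k : ℝ) * (a'.choose k : ℝ) *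
        ∏ j ∈ Finset.Icc 1 (k - 1), (((b : ℝ) - (j : ℝ)) / ((a' : ℝ) - (j : ℝ))) ^ n
      ≤ Real.exp 1 * (a' : ℝ) := by
  have ha : (0 : ℝ) < a' := by exact_mod_cast b.zero_le.trans_lt hba
  have hcond : ((b : ℝ) / (a' - b + 1)) ^ n ≤ (a' : ℝ)⁻¹ := by
    rw [← one_div]; exact (le_div_iff₀' ha).2 hcond
  rw [sum_Icc_one_eq_sum_range]
  simp only [Nat.add_sub_cancel]
  calc _ ≤ ∑ m ∈ range b, (a' : ℝ) / m ! :=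
        sum_le_sum fun m hm => succ_mul_choose_succ_mul_prod_le n (mem_range.1 hm) hba hcond
    _ = (∑ m ∈ range b, (1 : ℝ) ^ m / m !) * a' := by
        rw [sum_mul]; simp only [one_pow, div_mul_eq_mul_div, one_mul]
    _ ≤ Real.exp 1 * a' := by gcongr; exact Real.sum_le_exp_of_nonneg zero_le_one b

theorem stmt_16 (a' b n : ℕ) (hb : 2 ≤ b) (hba : b < a') (hn : 1 ≤ n)
    (hcond : (a' : ℝ) * ((b : ℝ) / ((a' : ℝ) - (b : ℝ) + 1)) ^ n ≤ 1) :
    ∑ k ∈ Finset.Icc 1 b, (k : ℝ) * (a'.choose k : ℝ) *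
        ∏ j ∈ Finset.Icc 1 (k - 1), (((b : ℝ) - (j : ℝ)) / ((a' : ℝ) - (j : ℝ))) ^ n
      ≤ Real.exp 1 * (a' : ℝ) :=
  stmt_16_general a' b n hba hcond
end
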